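/- arXiv:2604.22149 — 2 statements merged into one kernel-verified Lean document; each statement's English description precedes it below -/
import Mathlib

section
/- Under the hypotheses of the previous statement, by induction: if at time 0 there exists a safe control sequence of length H from the current state whose rollout avoids L and terminates in C, then for every t ≥ 0 the shifting-and-appending construction yields a control sequence of length H from the state at time t whose rollout avoids L and terminates in C. In particular, the closed-loop state trajectory obtained by always applying the first element of the stored safe sequence never enters L. -/
/-!
The shifted sequence retraces the old rollout one step later, and its one new step applies
the invariance law at the old terminal state, which lies in `C`; so the new rollout again
avoids `L` and ends in `C` (disjoint from `L`). Safety of the stored sequence is therefore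
an inductive invariant, and the current state is its rollout at time `0`.
-/

def rollout {X U : Type*} (f : X → U → X) (x : X) (u : ℕ → U) : ℕ → X
  | 0 => x
  | k + 1 => f (rollout f x u k) (u k)

def IsSafeControl {X U : Type*} (f : X → U → X) (L C : Set X) (H : ℕ) (x : X) (u : ℕ → U) :
    Prop :=
  (∀ k ≤ H, rollout f x u k ∉ L) ∧ rollout f x u H ∈ C

section

variable {X U : Type*} (f : X → U → X)

theorem rollout_congr {x : X} {u v : ℕ → U} {k : ℕ} (huv : ∀ i < k, u i = v i) :
    rollout f x u k = rollout f x v k := by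
  induction k with
  | zero => rfl
  | succ k ih =>
    simp only [rollout, ih fun i hi => huv i (by omega), huv k k.lt_succ_self]

theorem rollout_succ_eq_rollout_tail (x : X) (u : ℕ → U) (k : ℕ) :
    rollout f x u (k + 1) = rollout f (f x (u 0)) (fun i => u (i + 1)) k := by
  induction k with
  | zero => rfl
  | succ k ih => simp only [rollout] at ih ⊢; rw [ih]

theorem IsSafeControl.shift {L C : Set X} {uinv : X → U}
    (hdisj : ∀ y ∈ C, y ∉ L) (hinv : ∀ y ∈ C, f y (uinv y) ∈ C)
    {H : ℕ} (hH : 1 ≤ H) {x : X} {u v : ℕ → U} (hu : IsSafeControl f L C H x u)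
    (hv : ∀ k, v k = if k + 1 < H then u (k + 1) else uinv (rollout f x u H)) :
    IsSafeControl f L C H (f x (u 0)) v := by
  obtain ⟨m, rfl⟩ : ∃ m, H = m + 1 := ⟨H - 1, by omega⟩
  obtain ⟨hsafe, hterm⟩ := hu
  have hprefix : ∀ k ≤ m, rollout f (f x (u 0)) v k = rollout f x u (k + 1) := by
    intro k hk
    rw [rollout_succ_eq_rollout_tail]
    exact rollout_congr f fun i hi => by rw [hv, if_pos (by omega)]
  have hend : rollout f (f x (u 0)) v (m + 1) ∈ C := by
    change f (rollout f (f x (u 0)) v m) (v m) ∈ C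
    rw [hprefix m le_rfl, hv, if_neg (by omega)]
    exact hinv _ hterm
  refine ⟨fun k hk => ?_, hend⟩
  rcases Nat.lt_or_ge k (m + 1) with hk' | hk'
  · rw [hprefix k (by omega)]
    exact hsafe (k + 1) (by omega)
  · obtain rfl : k = m + 1 := by omega
    exact hdisj _ hend

end

/-- Closed-loop safety by induction: if the stored safe sequence at time `0` has a rollout
avoiding `L` and terminating in the safe control invariant set `C`, and at each step the
state advances by the first stored control while the stored sequence is shifted and the
invariance input `u_inv` of the terminal state is appended, then at every time `t` the
stored sequence's rollout avoids `L` and terminates in `C`; in particular the closed-loop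
trajectory never enters `L`. -/
theorem stmt4 {X U : Type*} (f : X → U → X) (L C : Set X) (uinv : X → U)
    (hdisj : ∀ y ∈ C, y ∉ L) (hinv : ∀ y ∈ C, f y (uinv y) ∈ C)
    (H : ℕ) (hH : 1 ≤ H)
    (xs : ℕ → X) (Us : ℕ → ℕ → U)
    (h0safe : ∀ k ≤ H, rollout f (xs 0) (Us 0) k ∉ L)
    (h0term : rollout f (xs 0) (Us 0) H ∈ C)
    (hstep : ∀ t, xs (t + 1) = f (xs t) (Us t 0))
    (hshift : ∀ t k, Us (t + 1) k =
      if k + 1 < H then Us t (k + 1) else uinv (rollout f (xs t) (Us t) H)) :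
    ∀ t, ((∀ k ≤ H, rollout f (xs t) (Us t) k ∉ L) ∧
        rollout f (xs t) (Us t) H ∈ C) ∧ xs t ∉ L := by
  have hsafe : ∀ t, IsSafeControl f L C H (xs t) (Us t) := by
    intro t
    induction t with
    | zero => exact ⟨h0safe, h0term⟩
    | succ t ih =>
      rw [hstep]
      exact ih.shift f hdisj hinv hH (hshift t)
  exact fun t => ⟨hsafe t, (hsafe t).1 0 (Nat.zero_le H)⟩
end

section
/- Probability that the empirical minimum underestimates the ε-quantile: let C : Ω → ℝ be measurable under probability measure μ, and let q_ε be any real number with μ({C < q_ε}) ≤ ε and μ({C ≤ q_ε}) ≥ ε. Then for N i.i.d. samples, Pr(μ({C < min_i C(ω_i)}) > ε) ≤ Pr(∀ i, C(ω_i) > q_ε) ≤ (1 − ε)^N. -/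
/-! If some sample satisfied `C (ω i) ≤ q_ε`, the empirical minimum would be at most `q_ε`, so
`μ {C < min}` could not exceed `μ {C < q_ε} ≤ ε`; hence the bad event forces every sample above
`q_ε`. Each sample lands above `q_ε` with probability `1 - μ {C ≤ q_ε} ≤ 1 - ε`, and independence
multiplies these bounds. -/

open MeasureTheory

section

variable {Ω : Type*} [MeasurableSpace Ω] {μ : Measure Ω} {C : Ω → ℝ}

lemma lt_of_measure_setOf_lt_lt_measure_setOf_lt {q t : ℝ}
    (h : μ {w | C w < q} < μ {w | C w < t}) : q < t := by
  by_contra! hle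
  exact h.not_ge (measure_mono fun w (hw : C w < t) => hw.trans_le hle)

lemma measure_setOf_lt_le_ofReal_one_sub [IsProbabilityMeasure μ] (hC : Measurable C)
    {q ε : ℝ} (hε : 0 ≤ ε) (hq : ENNReal.ofReal ε ≤ μ {w | C w ≤ q}) :
    μ {w | q < C w} ≤ ENNReal.ofReal (1 - ε) := by
  have hcompl : {w | q < C w} = {w | C w ≤ q}ᶜ := by
    ext w
    simp [not_le]
  calc μ {w | q < C w} = 1 - μ {w | C w ≤ q} := by
        rw [hcompl, prob_compl_eq_one_sub (measurableSet_le hC measurable_const)]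
    _ ≤ 1 - ENNReal.ofReal ε := tsub_le_tsub_left hq 1
    _ = ENNReal.ofReal (1 - ε) := by rw [ENNReal.ofReal_sub _ hε, ENNReal.ofReal_one]

lemma MeasureTheory.Measure.pi_setOf_forall_mem {ι : Type*} [Fintype ι] [SigmaFinite μ] (s : Set Ω) :
    (Measure.pi fun _ : ι => μ) {ω | ∀ i, ω i ∈ s} = μ s ^ Fintype.card ι := by
  have hpi : {ω : ι → Ω | ∀ i, ω i ∈ s} = Set.univ.pi fun _ => s := by
    ext ω
    simp
  rw [hpi, Measure.pi_pi, Finset.prod_const, Finset.card_univ]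

end

theorem stmt11_general {Ω : Type*} [MeasurableSpace Ω] (μ : Measure Ω) [IsProbabilityMeasure μ]
    (C : Ω → ℝ) (hC : Measurable C) (ε : ℝ) (hε : ε ∈ Set.Ioo (0 : ℝ) 1)
    (qε : ℝ) (hq1 : μ {w | C w < qε} ≤ ENNReal.ofReal ε)
    (hq2 : ENNReal.ofReal ε ≤ μ {w | C w ≤ qε})
    (N : ℕ) :
    (Measure.pi fun _ : Fin N => μ)
        {ω : Fin N → Ω | ENNReal.ofReal ε < μ {w | C w < ⨅ i, C (ω i)}} ≤
      (Measure.pi fun _ : Fin N => μ) {ω : Fin N → Ω | ∀ i, qε < C (ω i)} ∧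
    (Measure.pi fun _ : Fin N => μ) {ω : Fin N → Ω | ∀ i, qε < C (ω i)} ≤
      ENNReal.ofReal ((1 - ε) ^ N) := by
  refine ⟨measure_mono fun ω hω i => ?_, ?_⟩
  · exact (lt_of_measure_setOf_lt_lt_measure_setOf_lt (hq1.trans_lt hω)).trans_le
      (ciInf_le (Set.finite_range _).bddBelow i)
  · calc (Measure.pi fun _ : Fin N => μ) {ω : Fin N → Ω | ∀ i, ω i ∈ {w | qε < C w}}
        = μ {w | qε < C w} ^ N := by rw [Measure.pi_setOf_forall_mem, Fintype.card_fin]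
      _ ≤ ENNReal.ofReal (1 - ε) ^ N :=
        pow_le_pow_left' (measure_setOf_lt_le_ofReal_one_sub hC hε.1.le hq2) N
      _ = ENNReal.ofReal ((1 - ε) ^ N) := (ENNReal.ofReal_pow (sub_nonneg.2 hε.2.le) N).symm

/-- Quantile bound for the empirical minimum: if `q_ε` is an `ε`-quantile of `C` under `μ`
(`μ(C < q_ε) ≤ ε ≤ μ(C ≤ q_ε)`), then for `N` i.i.d. samples,
`Pr(μ({C < min_i C(ω_i)}) > ε) ≤ Pr(∀ i, C(ω_i) > q_ε) ≤ (1 − ε)^N`. -/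
theorem stmt11 {Ω : Type*} [MeasurableSpace Ω] (μ : Measure Ω) [IsProbabilityMeasure μ]
    (C : Ω → ℝ) (hC : Measurable C) (ε : ℝ) (hε : ε ∈ Set.Ioo (0 : ℝ) 1)
    (qε : ℝ) (hq1 : μ {w | C w < qε} ≤ ENNReal.ofReal ε)
    (hq2 : ENNReal.ofReal ε ≤ μ {w | C w ≤ qε})
    (N : ℕ) (hN : 0 < N) :
    (Measure.pi fun _ : Fin N => μ)
        {ω : Fin N → Ω | ENNReal.ofReal ε < μ {w | C w < ⨅ i, C (ω i)}} ≤
      (Measure.pi fun _ : Fin N => μ) {ω : Fin N → Ω | ∀ i, qε < C (ω i)} ∧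
    (Measure.pi fun _ : Fin N => μ) {ω : Fin N → Ω | ∀ i, qε < C (ω i)} ≤
      ENNReal.ofReal ((1 - ε) ^ N) :=
  stmt11_general μ C hC ε hε qε hq1 hq2 N
end
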